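/- Let P be a prime graph with n = |V(P)| ≥ 4 and let M1, …, Mn be non-empty graphs. Then P⟨M1, …, Mn⟩ is provable in GS if and only if there is some i ∈ {1, …, n} such that Mi is provable in GS and P⟨M1, …, M_{i-1}, ∅, M_{i+1}, …, Mn⟩ is provable in GS. -/

import Mathlib

namespace GSP

/-- Atoms: a propositional variable (coded by a natural number) with a polarity. -/
abbrev Atom := ℕ × Bool

/-- The dual atom. -/
def dualAtom (a : Atom) : Atom := (a.1, !a.2)

/-- A finite, simple, undirected graph whose vertices are labelled by atoms. -/
structure LGraph where
  V : Type
  [fintype : Fintype V]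
  adj : V → V → Prop
  symm : ∀ {v w : V}, adj v w → adj w v
  irrefl : ∀ v : V, ¬ adj v v
  label : V → Atom

attribute [instance] LGraph.fintype

namespace LGraph

/-- An isomorphism of labelled graphs: a vertex bijection preserving labels and
preserving and reflecting edges. -/
structure Iso (G H : LGraph) where
  toEquiv : G.V ≃ H.V
  adj_iff : ∀ v w : G.V, G.adj v w ↔ H.adj (toEquiv v) (toEquiv w)
  label_eq : ∀ v : G.V, H.label (toEquiv v) = G.label v

/-- `G ≅ H` : the graphs `G` and `H` are isomorphic. -/
def iso (G H : LGraph) : Prop := Nonempty (Iso G H)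

/-- The empty graph. -/
def empty : LGraph where
  V := Empty
  adj _ _ := False
  symm h := h.elim
  irrefl v := v.elim
  label v := v.elim

/-- The single-vertex graph labelled by the atom `a`. -/
def single (a : Atom) : LGraph where
  V := Unit
  adj _ _ := False
  symm h := h.elim
  irrefl _ h := h
  label _ := a

def parAdj (G H : LGraph) : G.V ⊕ H.V → G.V ⊕ H.V → Prop
  | .inl a, .inl b => G.adj a b
  | .inr a, .inr b => H.adj a b
  | _, _ => False

/-- The par `G ⅋ H` : disjoint union of `G` and `H`. -/
def par (G H : LGraph) : LGraph where
  V := G.V ⊕ H.V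
  adj := parAdj G H
  symm := by
    rintro (a | a) (b | b) h
    · exact G.symm h
    · exact h.elim
    · exact h.elim
    · exact H.symm h
  irrefl := by
    rintro (a | a) h
    · exact G.irrefl a h
    · exact H.irrefl a h
  label := Sum.elim G.label H.label

def tensorAdj (G H : LGraph) : G.V ⊕ H.V → G.V ⊕ H.V → Prop
  | .inl a, .inl b => G.adj a b
  | .inr a, .inr b => H.adj a b
  | .inl _, .inr _ => True
  | .inr _, .inl _ => True

/-- The tensor `G ⊗ H` : join of `G` and `H` (disjoint union plus all edges in between). -/
def tensor (G H : LGraph) : LGraph where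
  V := G.V ⊕ H.V
  adj := tensorAdj G H
  symm := by
    rintro (a | a) (b | b) h
    · exact G.symm h
    · exact trivial
    · exact trivial
    · exact H.symm h
  irrefl := by
    rintro (a | a) h
    · exact G.irrefl a h
    · exact H.irrefl a h
  label := Sum.elim G.label H.label

/-- The dual graph `Ḡ` : same vertices, complemented edges, dualized labels. -/
def dual (G : LGraph) : LGraph where
  V := G.V
  adj v w := v ≠ w ∧ ¬ G.adj v w
  symm h := ⟨fun e => h.1 e.symm, fun h' => h.2 (G.symm h')⟩
  irrefl _ h := h.1 rfl
  label v := dualAtom (G.label v)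

def plugAdj (C : LGraph) (R : Set C.V) (X : LGraph) : C.V ⊕ X.V → C.V ⊕ X.V → Prop
  | .inl a, .inl b => C.adj a b
  | .inr a, .inr b => X.adj a b
  | .inl a, .inr _ => a ∈ R
  | .inr _, .inl b => b ∈ R

/-- `C[X]_R` : the graph obtained from the context `C[·]_R` by inserting the graph `X`
as a module whose vertices are adjacent exactly to the vertices in `R`. -/
def plug (C : LGraph) (R : Set C.V) (X : LGraph) : LGraph where
  V := C.V ⊕ X.V
  adj := plugAdj C R X
  symm := by
    rintro (a | a) (b | b) h
    · exact C.symm h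
    · exact h
    · exact h
    · exact X.symm h
  irrefl := by
    rintro (a | a) h
    · exact C.irrefl a h
    · exact X.irrefl a h
  label := Sum.elim C.label X.label

def compAdj (G : LGraph) (H : G.V → LGraph) :
    (Σ v : G.V, (H v).V) → (Σ v : G.V, (H v).V) → Prop := fun x y =>
  (∃ (v : G.V) (a b : (H v).V), x = ⟨v, a⟩ ∧ y = ⟨v, b⟩ ∧ (H v).adj a b) ∨
    (x.1 ≠ y.1 ∧ G.adj x.1 y.1)

/-- The composition `G⟨H v₁, …, H vₙ⟩` of the family `H` via the graph `G`:
replace each vertex `v` of `G` by the graph `H v`. -/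
def comp (G : LGraph) (H : G.V → LGraph) : LGraph where
  V := Σ v : G.V, (H v).V
  adj := compAdj G H
  symm := by
    rintro x y (⟨v, a, b, hx, hy, hab⟩ | ⟨hne, hadj⟩)
    · exact Or.inl ⟨v, b, a, hy, hx, (H v).symm hab⟩
    · exact Or.inr ⟨hne.symm, G.symm hadj⟩
  irrefl := by
    rintro ⟨v, a⟩ (⟨w, x, y, hx, hy, hxy⟩ | ⟨hne, _⟩)
    · have h := hx.symm.trans hy
      obtain rfl : x = y := by simpa using h
      exact (H w).irrefl x hxy
    · exact hne rfl
  label x := (H x.1).label x.2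

/-- A module of `G` : a set `M` of vertices such that every vertex outside `M`
is adjacent either to all vertices of `M` or to none of them. -/
def IsModule (G : LGraph) (M : Set G.V) : Prop :=
  ∀ v ∉ M, ∀ x ∈ M, ∀ y ∈ M, (G.adj v x ↔ G.adj v y)

/-- A prime graph: at least 2 vertices and only trivial modules. -/
def Prime (G : LGraph) : Prop :=
  2 ≤ Fintype.card G.V ∧
    ∀ M : Set G.V, G.IsModule M → M = ∅ ∨ (∃ v, M = {v}) ∨ M = Set.univ

/-- `G` is `P₄`-free: no four distinct vertices induce a path on 4 vertices. -/
def P4Free (G : LGraph) : Prop :=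
  ¬ ∃ v₁ v₂ v₃ v₄ : G.V,
      v₁ ≠ v₂ ∧ v₁ ≠ v₃ ∧ v₁ ≠ v₄ ∧ v₂ ≠ v₃ ∧ v₂ ≠ v₄ ∧ v₃ ≠ v₄ ∧
      G.adj v₁ v₂ ∧ G.adj v₂ v₃ ∧ G.adj v₃ v₄ ∧
      ¬ G.adj v₁ v₃ ∧ ¬ G.adj v₁ v₄ ∧ ¬ G.adj v₂ v₄

end LGraph

open LGraph

/-- The `n`-fold tensor `X₁ ⊗ ⋯ ⊗ Xₙ`. -/
def bigTensor : (n : ℕ) → (Fin n → LGraph) → LGraph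
  | 0, _ => LGraph.empty
  | n + 1, F => (F 0).tensor (bigTensor n fun i => F i.succ)

/-- The `n`-fold par `X₁ ⅋ ⋯ ⅋ Xₙ`. -/
def bigPar : (n : ℕ) → (Fin n → LGraph) → LGraph
  | 0, _ => LGraph.empty
  | n + 1, F => (F 0).par (bigPar n fun i => F i.succ)

/-- The inference rules of system GS (premise, conclusion). -/
inductive GSRule : LGraph → LGraph → Prop
  /-- ai↓ : premise `∅`, conclusion `ā ⅋ a`. -/
  | ai (a : Atom) : GSRule LGraph.empty ((single (dualAtom a)).par (single a))
  /-- ss↓ : premise `B[A]_S`, conclusion `B ⅋ A`, for `A ≠ ∅` and `S ≠ ∅`. -/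
  | ss (A B : LGraph) (S : Set B.V) :
      Nonempty A.V → S ≠ ∅ → GSRule (B.plug S A) (B.par A)
  /-- p↓ : premise `(M₁ ⅋ N₁) ⊗ ⋯ ⊗ (Mₙ ⅋ Nₙ)`, conclusion `P̄⟨M₁,…,Mₙ⟩ ⅋ P⟨N₁,…,Nₙ⟩`,
  for `P` prime with `n = |V(P)| ≥ 4` and all `Mᵢ ≠ ∅`. -/
  | p (n : ℕ) (P : LGraph) (e : P.V ≃ Fin n) (M N : Fin n → LGraph) :
      P.Prime → 4 ≤ n → (∀ i, Nonempty (M i).V) →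
      GSRule (bigTensor n fun i => (M i).par (N i))
        ((P.dual.comp fun v => M (e v)).par (P.comp fun v => N (e v)))

/-- The "up" rules ai↑, ss↑, p↑ (premise, conclusion). -/
inductive UpRule : LGraph → LGraph → Prop
  /-- ai↑ : premise `a ⊗ ā`, conclusion `∅`. -/
  | ai (a : Atom) : UpRule ((single a).tensor (single (dualAtom a))) LGraph.empty
  /-- ss↑ : premise `B ⊗ A`, conclusion `B[A]_S`, for `A ≠ ∅` and `S ≠ V(B)`. -/
  | ss (A B : LGraph) (S : Set B.V) :
      Nonempty A.V → S ≠ Set.univ → UpRule (B.tensor A) (B.plug S A)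
  /-- p↑ : premise `P⟨M₁,…,Mₙ⟩ ⊗ P̄⟨N₁,…,Nₙ⟩`, conclusion `(M₁ ⊗ N₁) ⅋ ⋯ ⅋ (Mₙ ⊗ Nₙ)`,
  for `P` prime with `n = |V(P)| ≥ 4` and all `Mᵢ ≠ ∅`. -/
  | p (n : ℕ) (P : LGraph) (e : P.V ≃ Fin n) (M N : Fin n → LGraph) :
      P.Prime → 4 ≤ n → (∀ i, Nonempty (M i).V) →
      UpRule ((P.comp fun v => M (e v)).tensor (P.dual.comp fun v => N (e v)))
        (bigPar n fun i => (M i).tensor (N i))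

/-- The rules of system SGS : the rules of GS together with their duals. -/
def SGSRule (G H : LGraph) : Prop := GSRule G H ∨ UpRule G H

/-- A single inference step in a system: inside some context, replace a module
isomorphic to the premise of a rule by the corresponding conclusion. -/
def Step (Rules : LGraph → LGraph → Prop) (G H : LGraph) : Prop :=
  ∃ (C : LGraph) (R : Set C.V) (p c : LGraph),
    Rules p c ∧ G.iso (C.plug R p) ∧ H.iso (C.plug R c)

/-- A derivation in a system from `G` to `H` : a finite sequence of inference steps
and isomorphisms leading from `G` to `H`. -/
def Deriv (Rules : LGraph → LGraph → Prop) (G H : LGraph) : Prop :=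
  Relation.ReflTransGen (fun X Y => X.iso Y ∨ Step Rules X Y) G H

/-- A graph is provable in a system if there is a derivation from `∅` to it. -/
def Provable (Rules : LGraph → LGraph → Prop) (G : LGraph) : Prop :=
  Deriv Rules LGraph.empty G

/-- Formulas: unit, positive and negative atoms, par and tensor. -/
inductive Formula where
  | unit : Formula
  | pos (a : ℕ) : Formula
  | neg (a : ℕ) : Formula
  | par (φ ψ : Formula) : Formula
  | tens (φ ψ : Formula) : Formula

/-- The graph `[φ]` of a formula `φ`. -/
def Formula.graph : Formula → LGraph
  | .unit => LGraph.empty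
  | .pos a => single (a, true)
  | .neg a => single (a, false)
  | .par φ ψ => φ.graph.par ψ.graph
  | .tens φ ψ => φ.graph.tensor ψ.graph

/-- Structural equivalence of formulas: the smallest congruence making `⅋` and `⊗`
associative and commutative with unit `∘`. -/
inductive Formula.equiv : Formula → Formula → Prop
  | refl (φ) : Formula.equiv φ φ
  | symm {φ ψ} : Formula.equiv φ ψ → Formula.equiv ψ φ
  | trans {φ ψ χ} : Formula.equiv φ ψ → Formula.equiv ψ χ → Formula.equiv φ χ
  | parComm (φ ψ) : Formula.equiv (.par φ ψ) (.par ψ φ)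
  | parAssoc (φ ψ χ) : Formula.equiv (.par φ (.par ψ χ)) (.par (.par φ ψ) χ)
  | parUnit (φ) : Formula.equiv (.par φ .unit) φ
  | tensComm (φ ψ) : Formula.equiv (.tens φ ψ) (.tens ψ φ)
  | tensAssoc (φ ψ χ) : Formula.equiv (.tens φ (.tens ψ χ)) (.tens (.tens φ ψ) χ)
  | tensUnit (φ) : Formula.equiv (.tens φ .unit) φ
  | parCongr {φ φ' ψ ψ'} : Formula.equiv φ φ' → Formula.equiv ψ ψ' →
      Formula.equiv (.par φ ψ) (.par φ' ψ')
  | tensCongr {φ φ' ψ ψ'} : Formula.equiv φ φ' → Formula.equiv ψ ψ' →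
      Formula.equiv (.tens φ ψ) (.tens φ' ψ')

/-- A formula is unit-free if it contains no occurrence of the unit `∘`. -/
def Formula.UnitFree : Formula → Prop
  | .unit => False
  | .pos _ => True
  | .neg _ => True
  | .par φ ψ => φ.UnitFree ∧ ψ.UnitFree
  | .tens φ ψ => φ.UnitFree ∧ ψ.UnitFree

/-- The sequent calculus MLL° (multiplicative linear logic with mix) on multisets
of formulas. -/
inductive MLL : Multiset Formula → Prop
  | ax (a : ℕ) : MLL {Formula.pos a, Formula.neg a}
  | tens {Γ Δ : Multiset Formula} (φ ψ : Formula) :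
      MLL (φ ::ₘ Γ) → MLL (ψ ::ₘ Δ) → MLL (Formula.tens φ ψ ::ₘ (Γ + Δ))
  | par {Γ : Multiset Formula} (φ ψ : Formula) :
      MLL (φ ::ₘ ψ ::ₘ Γ) → MLL (Formula.par φ ψ ::ₘ Γ)
  | mix {Γ Δ : Multiset Formula} : MLL Γ → MLL Δ → MLL (Γ + Δ)

/-!
A module of a prime composition `P⟨M₁, …, Mₙ⟩` with non-empty parts is empty, inside one
component, or everything. The conclusion `c` of the last rule instance in a derivation of
`P⟨M₁, …, Mₙ⟩` is a non-empty module. If it lies inside `Mᵢ`, the rule instance rewrites `Mᵢ`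
alone, so the premise graph is `P⟨M₁, …, N, …, Mₙ⟩` with `N` rewriting to `Mᵢ`, and induction on
the derivation applies to it. Otherwise `c` is the whole graph. A GS conclusion is a par of two
non-empty graphs, which no prime composition is, unless it is the conclusion `Q̄⟨M'⟩ ⅋ ∅` of
`p↓`, whose premise is `M'₁ ⊗ ⋯ ⊗ M'ₘ`. Isomorphic prime compositions have isomorphic
components, and the factors of a provable tensor are provable (by the same induction: a
conclusion has no join cut, so it lies on one side of a tensor); hence every `Mᵢ` is provable.
Conversely, a proof of `Mᵢ` runs inside the empty slot of `P⟨…, ∅, …⟩`.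
-/

end GSP

lemma Fintype.exists_ne_ne_of_three_le_card {α : Type*} [Fintype α]
    (h : 3 ≤ Fintype.card α) (a b : α) : ∃ c, c ≠ a ∧ c ≠ b := by
  classical
  have : 0 < ((Finset.univ.erase a).erase b).card := by
    have := Finset.pred_card_le_card_erase (a := b) (s := Finset.univ.erase a)
    rw [Finset.card_erase_of_mem (Finset.mem_univ a), Finset.card_univ] at this
    omega
  obtain ⟨c, hc⟩ := Finset.card_pos.mp this
  exact ⟨c, Finset.ne_of_mem_erase (Finset.mem_of_mem_erase hc), Finset.ne_of_mem_erase hc⟩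

namespace Equiv

def sigmaSplit {α : Type*} [DecidableEq α] (β : α → Type*) (w : α) :
    (Σ v, β v) ≃ (Σ v : {v // v ≠ w}, β v) ⊕ β w where
  toFun x := if h : x.1 = w then .inr (h ▸ x.2) else .inl ⟨⟨x.1, h⟩, x.2⟩
  invFun := Sum.elim (fun y => ⟨y.1.1, y.2⟩) (fun b => ⟨w, b⟩)
  left_inv := by
    rintro ⟨v, a⟩
    by_cases h : v = w
    · subst h
      simp
    · simp [h]
  right_inv := by
    rintro (⟨⟨v, hv⟩, a⟩ | b)
    · simp [hv]
    · simp

@[simp] lemma sigmaSplit_apply_self {α : Type*} [DecidableEq α] (β : α → Type*)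
    (w : α) (b : β w) : Equiv.sigmaSplit β w ⟨w, b⟩ = .inr b := by
  simp [Equiv.sigmaSplit]

@[simp] lemma sigmaSplit_apply_of_ne {α : Type*} [DecidableEq α] (β : α → Type*)
    {v w : α} (h : v ≠ w) (a : β v) : Equiv.sigmaSplit β w ⟨v, a⟩ = .inl ⟨⟨v, h⟩, a⟩ := by
  simp [Equiv.sigmaSplit, h]

lemma sigmaSplit_isRight {α : Type*} [DecidableEq α] (β : α → Type*) {w : α}
    {x : Σ v, β v} (hx : x.1 = w) : (Equiv.sigmaSplit β w x).isRight := by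
  obtain ⟨v, a⟩ := x
  subst hx
  simp

variable {α β γ δ : Type*} (e : α ⊕ γ ≃ β ⊕ δ) (h : ∀ z, (e (.inr z)).isRight)
include h

lemma isLeft_symm_inl_of_forall_isRight (b : β) : (e.symm (.inl b)).isLeft := by
  rcases hb : e.symm (.inl b) with a | z
  · rfl
  · have := h z
    rw [← hb, apply_symm_apply] at this
    exact absurd this (by simp)

def sumSplitLeft : α ≃ β ⊕ {a // (e (.inl a)).isRight} where
  toFun a := if ha : (e (.inl a)).isRight then .inr ⟨a, ha⟩
    else .inl ((e (.inl a)).getLeft (by simpa using ha))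
  invFun := Sum.elim (fun b => (e.symm (.inl b)).getLeft (isLeft_symm_inl_of_forall_isRight e h b))
    Subtype.val
  left_inv a := by
    by_cases ha : (e (.inl a)).isRight <;> simp [ha]
  right_inv := by
    rintro (b | ⟨a, ha⟩)
    · simp
    · simp [ha]

def sumSplitRight : {a // (e (.inl a)).isRight} ⊕ γ ≃ δ where
  toFun := Sum.elim (fun s => (e (.inl s.1)).getRight s.2) (fun z => (e (.inr z)).getRight (h z))
  invFun d := if hd : (e.symm (.inr d)).isLeft then
      .inl ⟨(e.symm (.inr d)).getLeft hd, by simp⟩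
    else .inr ((e.symm (.inr d)).getRight (by simpa using hd))
  left_inv := by
    rintro (⟨a, ha⟩ | z) <;> simp
  right_inv d := by
    by_cases hd : (e.symm (.inr d)).isLeft <;> simp [hd]

lemma sumSplitLeft_apply_of_isRight {a : α} (ha : (e (.inl a)).isRight) :
    sumSplitLeft e h a = .inr ⟨a, ha⟩ := by
  simp [sumSplitLeft, ha]

lemma sumSplitLeft_apply_of_eq_inl {a : α} {b : β} (ha : e (.inl a) = .inl b) :
    sumSplitLeft e h a = .inl b := by
  simp [sumSplitLeft, ha]

end Equiv

namespace GSP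

noncomputable section

open scoped Classical

namespace LGraph

namespace Iso

variable {G H K : LGraph}

def refl (G : LGraph) : Iso G G := ⟨Equiv.refl _, fun _ _ => Iff.rfl, fun _ => rfl⟩

def symm (φ : Iso G H) : Iso H G where
  toEquiv := φ.toEquiv.symm
  adj_iff v w := by
    rw [φ.adj_iff, φ.toEquiv.apply_symm_apply, φ.toEquiv.apply_symm_apply]
  label_eq v := by rw [← φ.label_eq, φ.toEquiv.apply_symm_apply]

def trans (φ : Iso G H) (ψ : Iso H K) : Iso G K where
  toEquiv := φ.toEquiv.trans ψ.toEquiv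
  adj_iff v w := (φ.adj_iff v w).trans (ψ.adj_iff _ _)
  label_eq v := (ψ.label_eq _).trans (φ.label_eq v)

def ofEq (h : G = H) : Iso G H := h ▸ refl G

def ofIsEmpty [IsEmpty G.V] [IsEmpty H.V] : Iso G H where
  toEquiv := Equiv.equivOfIsEmpty _ _
  adj_iff v := isEmptyElim v
  label_eq v := isEmptyElim v

lemma adj_iff_of_eq (φ : Iso G K) {u u' : G.V} {v v' : K.V}
    (hu : φ.toEquiv u = v) (hu' : φ.toEquiv u' = v') : G.adj u u' ↔ K.adj v v' := by
  subst hu hu'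
  exact φ.adj_iff u u'

lemma label_eq_of_eq (φ : Iso G K) {u : G.V} {v : K.V}
    (hu : φ.toEquiv u = v) : K.label v = G.label u := by
  subst hu
  exact φ.label_eq u

end Iso

instance : IsEmpty LGraph.empty.V := inferInstanceAs (IsEmpty Empty)

def tensorComm (G H : LGraph) : Iso (G.tensor H) (H.tensor G) where
  toEquiv := Equiv.sumComm _ _
  adj_iff := by rintro (v | v) (w | w) <;> exact Iff.rfl
  label_eq := by rintro (v | v) <;> rfl

def tensorIsoPlugUniv (X Y : LGraph) : Iso (X.tensor Y) (Y.plug Set.univ X) where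
  toEquiv := Equiv.sumComm _ _
  adj_iff := by
    rintro (v | v) (w | w)
    exacts [Iff.rfl, iff_of_true trivial trivial, iff_of_true trivial trivial, Iff.rfl]
  label_eq := by rintro (v | v) <;> rfl

def plugCongr {C : LGraph} (R : Set C.V) {X Y : LGraph} (φ : Iso X Y) :
    Iso (C.plug R X) (C.plug R Y) where
  toEquiv := Equiv.sumCongr (Equiv.refl _) φ.toEquiv
  adj_iff := by
    rintro (v | v) (w | w)
    exacts [Iff.rfl, Iff.rfl, Iff.rfl, φ.adj_iff v w]
  label_eq := by
    rintro (v | v)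
    exacts [rfl, φ.label_eq v]

def plugCongrLeft {C D : LGraph} {R : Set C.V} {R' : Set D.V} (θ : Iso C D)
    (hR : ∀ a, a ∈ R ↔ θ.toEquiv a ∈ R') (X : LGraph) :
    Iso (C.plug R X) (D.plug R' X) where
  toEquiv := Equiv.sumCongr θ.toEquiv (Equiv.refl _)
  adj_iff := by
    rintro (v | v) (w | w)
    exacts [θ.adj_iff v w, hR v, hR w, Iff.rfl]
  label_eq := by
    rintro (v | v)
    exacts [θ.label_eq v, rfl]

def plugEmptyLeft {C : LGraph} [IsEmpty C.V] (R : Set C.V) (X : LGraph) :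
    Iso (C.plug R X) X where
  toEquiv := Equiv.emptySum _ _
  adj_iff := by
    rintro (v | v) (w | w)
    all_goals first | exact isEmptyElim v | exact isEmptyElim w | exact Iff.rfl
  label_eq := by
    rintro (v | v)
    exacts [isEmptyElim v, rfl]

def parEmptyRight (X Y : LGraph) [IsEmpty Y.V] : Iso (X.par Y) X where
  toEquiv := Equiv.sumEmpty _ _
  adj_iff := by
    rintro (v | v) (w | w)
    all_goals first | exact isEmptyElim v | exact isEmptyElim w | exact Iff.rfl
  label_eq := by
    rintro (v | v)
    exacts [rfl, isEmptyElim v]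

/-- Plugging is associative: `C[B[X]_R]_S ≅ (C[B]_S)[X]_{S ∪ R}`. -/
def plugPlug (C : LGraph) (S : Set C.V) (B : LGraph) (R : Set B.V) (X : LGraph) :
    Iso (C.plug S (B.plug R X)) ((C.plug S B).plug {u | Sum.elim (· ∈ S) (· ∈ R) u} X) where
  toEquiv := (Equiv.sumAssoc _ _ _).symm
  adj_iff := by rintro (v | v | v) (w | w | w) <;> exact Iff.rfl
  label_eq := by rintro (v | v | v) <;> rfl

variable {G K P Q : LGraph} {H : P.V → LGraph}

abbrev induce (G : LGraph) (s : Set G.V) : LGraph where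
  V := s
  adj a b := G.adj a b
  symm h := G.symm h
  irrefl a := G.irrefl a
  label a := G.label a

lemma adj_comm (G : LGraph) (a b : G.V) : G.adj a b ↔ G.adj b a := ⟨G.symm, G.symm⟩

lemma comp_adj_mk_self {v : P.V} {a b : (H v).V} :
    (P.comp H).adj ⟨v, a⟩ ⟨v, b⟩ ↔ (H v).adj a b := by
  refine ⟨?_, fun h => Or.inl ⟨v, a, b, rfl, rfl, h⟩⟩
  rintro (⟨v', a', b', h1, h2, h3⟩ | ⟨hne, _⟩)
  · cases h1
    cases h2
    exact h3
  · exact absurd rfl hne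

lemma comp_adj_mk_of_ne {v w : P.V} (hvw : v ≠ w) {a : (H v).V} {b : (H w).V} :
    (P.comp H).adj ⟨v, a⟩ ⟨w, b⟩ ↔ P.adj v w := by
  refine ⟨?_, fun h => Or.inr ⟨hvw, h⟩⟩
  rintro (⟨v', a', b', h1, h2, -⟩ | ⟨-, h⟩)
  · cases h1
    cases h2
    exact absurd rfl hvw
  · exact h

lemma comp_adj_of_fst_ne {x y : (P.comp H).V} (h : x.1 ≠ y.1) :
    (P.comp H).adj x y ↔ P.adj x.1 y.1 :=
  comp_adj_mk_of_ne h

lemma comp_induce_adj {s : Set P.V} {x y : ((P.induce s).comp fun v => H v.1).V} :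
    ((P.induce s).comp fun v => H v.1).adj x y ↔ (P.comp H).adj ⟨x.1.1, x.2⟩ ⟨y.1.1, y.2⟩ := by
  obtain ⟨v, a⟩ := x
  obtain ⟨v', b⟩ := y
  by_cases h : v = v'
  · subst h
    rw [comp_adj_mk_self, comp_adj_mk_self]
  · rw [comp_adj_mk_of_ne h, comp_adj_mk_of_ne (Subtype.coe_ne_coe.mpr h)]

def fiberIso (P : LGraph) (H : P.V → LGraph) (w : P.V) :
    Iso (H w) ((P.comp H).induce {x | x.1 = w}) where
  toEquiv := (Equiv.sigmaSubtype (β := fun v => (H v).V) w).symm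
  adj_iff _ _ := comp_adj_mk_self.symm
  label_eq _ := rfl

/-- The context `P⟨H₁, …, [·], …, Hₙ⟩` around the component at `w`, with `X` in the hole. -/
def compAt (P : LGraph) (H : P.V → LGraph) (w : P.V) (X : LGraph) : LGraph :=
  ((P.induce {v | v ≠ w}).comp fun v => H v.1).plug {x | P.adj x.1.1 w} X

def compIsoCompAt (P : LGraph) (H : P.V → LGraph) (w : P.V) :
    Iso (P.comp H) (compAt P H w (H w)) where
  toEquiv := Equiv.sigmaSplit (fun v => (H v).V) w
  adj_iff := by
    rintro ⟨v, a⟩ ⟨v', b⟩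
    by_cases h : v = w <;> by_cases h' : v' = w
    · subst h h'
      erw [Equiv.sigmaSplit_apply_self, Equiv.sigmaSplit_apply_self, comp_adj_mk_self]
      rfl
    · subst h
      erw [Equiv.sigmaSplit_apply_self, Equiv.sigmaSplit_apply_of_ne _ h',
        comp_adj_mk_of_ne (Ne.symm h'), adj_comm]
      rfl
    · subst h'
      erw [Equiv.sigmaSplit_apply_self, Equiv.sigmaSplit_apply_of_ne _ h, comp_adj_mk_of_ne h]
      rfl
    · erw [Equiv.sigmaSplit_apply_of_ne _ h, Equiv.sigmaSplit_apply_of_ne _ h']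
      exact (comp_induce_adj (x := ⟨⟨v, h⟩, a⟩) (y := ⟨⟨v', h'⟩, b⟩)).symm
  label_eq := by
    rintro ⟨v, a⟩
    by_cases h : v = w
    · subst h
      erw [Equiv.sigmaSplit_apply_self]
      rfl
    · erw [Equiv.sigmaSplit_apply_of_ne _ h]
      rfl

lemma compAt_congr {H₁ H₂ : P.V → LGraph} {w : P.V} (h : ∀ v ≠ w, H₁ v = H₂ v) (X : LGraph) :
    compAt P H₁ w X = compAt P H₂ w X := by
  have : (fun v : {v // v ≠ w} => H₁ v.1) = (fun v => H₂ v.1) := funext fun v => h v v.2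
  exact congrArg (fun F => ((P.induce {v | v ≠ w}).comp F).plug {x | P.adj x.1.1 w} X) this

def compUpdateIso (P : LGraph) (H : P.V → LGraph) (w : P.V) (X : LGraph) :
    Iso (P.comp (Function.update H w X)) (compAt P H w X) :=
  (compIsoCompAt P _ w).trans <| Iso.ofEq <| by
    rw [Function.update_self, compAt_congr fun v hv => Function.update_of_ne hv X H]

lemma isModule_range_inr_plug (C : LGraph) (R : Set C.V) (X : LGraph) :
    (C.plug R X).IsModule (Set.range Sum.inr) := by
  rintro (a | x) hv _ ⟨x', rfl⟩ _ ⟨y', rfl⟩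
  · exact Iff.rfl
  · exact absurd ⟨x, rfl⟩ hv

lemma isModule_fiber (P : LGraph) (H : P.V → LGraph) (w : P.V) :
    (P.comp H).IsModule {x | x.1 = w} := by
  rintro u (hu : u.1 ≠ w) x (rfl : x.1 = w) y (hy : y.1 = x.1)
  rw [comp_adj_of_fst_ne hu, comp_adj_of_fst_ne (y := y) (hy ▸ hu), hy]

lemma Prime.dual (hP : P.Prime) : P.dual.Prime := by
  refine ⟨hP.1, fun M hM => hP.2 M fun v hv x hx y hy => ?_⟩
  have hvx : v ≠ x := fun h => hv (h ▸ hx)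
  have hvy : v ≠ y := fun h => hv (h ▸ hy)
  have := hM v hv x hx y hy
  change (v ≠ x ∧ ¬P.adj v x) ↔ (v ≠ y ∧ ¬P.adj v y) at this
  simpa [hvx, hvy, not_iff_not] using this

lemma Prime.exists_adj_and_exists_not_adj (hP : P.Prime) (hcard : 3 ≤ Fintype.card P.V)
    (v : P.V) : (∃ u, u ≠ v ∧ P.adj v u) ∧ ∃ u, u ≠ v ∧ ¬ P.adj v u := by
  obtain ⟨x, hxv, -⟩ := Fintype.exists_ne_ne_of_three_le_card hcard v v
  obtain ⟨y, hyv, hyx⟩ := Fintype.exists_ne_ne_of_three_le_card hcard v x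
  have hmod : ¬ P.IsModule {v}ᶜ := by
    intro h
    rcases hP.2 _ h with h0 | ⟨u, hu⟩ | h1
    · exact h0.subset (Set.mem_compl_singleton_iff.mpr hxv)
    · have hx : x ∈ ({u} : Set P.V) := hu ▸ Set.mem_compl_singleton_iff.mpr hxv
      have hy : y ∈ ({u} : Set P.V) := hu ▸ Set.mem_compl_singleton_iff.mpr hyv
      exact hyx (hy.trans hx.symm)
    · exact (h1.symm.subset (Set.mem_univ v)) rfl
  simp only [IsModule, Set.mem_compl_iff, Set.mem_singleton_iff, not_not, forall_eq] at hmod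
  push Not at hmod
  obtain ⟨a, hav, b, hbv, hab⟩ := hmod
  rcases hab with ⟨ha, hb⟩ | ⟨ha, hb⟩
  · exact ⟨⟨a, hav, ha⟩, b, hbv, hb⟩
  · exact ⟨⟨b, hbv, hb⟩, a, hav, ha⟩

lemma isModule_image_fst (hH : ∀ v, Nonempty (H v).V) {N : Set (P.comp H).V}
    (hN : (P.comp H).IsModule N) : P.IsModule (Sigma.fst '' N) := by
  rintro q hq _ ⟨x, hx, rfl⟩ _ ⟨y, hy, rfl⟩
  obtain ⟨a⟩ := hH q
  have hqa : (⟨q, a⟩ : (P.comp H).V) ∉ N := fun h => hq ⟨_, h, rfl⟩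
  have hqx : q ≠ x.1 := fun h => hq ⟨x, hx, h.symm⟩
  have hqy : q ≠ y.1 := fun h => hq ⟨y, hy, h.symm⟩
  simpa only [comp_adj_of_fst_ne (x := ⟨q, a⟩) hqx, comp_adj_of_fst_ne (x := ⟨q, a⟩) hqy]
    using hN _ hqa x hx y hy

lemma Prime.eq_univ_of_image_fst_eq_univ (hP : P.Prime) (hcard : 3 ≤ Fintype.card P.V)
    {N : Set (P.comp H).V} (hN : (P.comp H).IsModule N) (hfst : Sigma.fst '' N = Set.univ) :
    N = Set.univ := by
  refine Set.eq_univ_of_forall fun y => by_contra fun hy => ?_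
  obtain ⟨⟨k, hky, hadj⟩, k', hk'y, hnadj⟩ := hP.exists_adj_and_exists_not_adj hcard y.1
  obtain ⟨x, hx, rfl⟩ := hfst.symm.subset (Set.mem_univ k)
  obtain ⟨x', hx', rfl⟩ := hfst.symm.subset (Set.mem_univ k')
  have := hN y hy x hx x' hx'
  rw [comp_adj_of_fst_ne hky.symm, comp_adj_of_fst_ne hk'y.symm] at this
  exact hnadj (this.mp hadj)

lemma Prime.exists_fiber_of_isModule (hP : P.Prime) (hcard : 3 ≤ Fintype.card P.V)
    (hH : ∀ v, Nonempty (H v).V) {N : Set (P.comp H).V} (hN : (P.comp H).IsModule N)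
    (hne : N.Nonempty) (hnu : N ≠ Set.univ) : ∃ w, ∀ x ∈ N, x.1 = w := by
  rcases hP.2 _ (isModule_image_fst hH hN) with h0 | ⟨w, hw⟩ | h1
  · exact absurd h0 (hne.image _).ne_empty
  · exact ⟨w, fun x hx => hw.subset ⟨x, hx, rfl⟩⟩
  · exact absurd (hP.eq_univ_of_image_fst_eq_univ hcard hN h1) hnu

lemma Prime.eq_univ_or_eq_univ_of_isModule (hP : P.Prime) (hcard : 3 ≤ Fintype.card P.V)
    (hH : ∀ v, Nonempty (H v).V) {S T : Set (P.comp H).V} (hS : (P.comp H).IsModule S)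
    (hT : (P.comp H).IsModule T) (hcov : ∀ x, x ∈ S ∨ x ∈ T) : S = Set.univ ∨ T = Set.univ := by
  by_contra! h
  have hne : ∀ {A B : Set (P.comp H).V}, (∀ x, x ∈ A ∨ x ∈ B) → B ≠ Set.univ → A.Nonempty :=
    fun hAB hB => by
      obtain ⟨x, hx⟩ := (Set.ne_univ_iff_exists_notMem _).mp hB
      exact ⟨x, (hAB x).resolve_right hx⟩
  obtain ⟨w₁, hw₁⟩ := hP.exists_fiber_of_isModule hcard hH hS (hne hcov h.2) h.1
  obtain ⟨w₂, hw₂⟩ := hP.exists_fiber_of_isModule hcard hH hT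
    (hne (fun x => (hcov x).symm) h.1) h.2
  obtain ⟨u, hu₁, hu₂⟩ := Fintype.exists_ne_ne_of_three_le_card hcard w₁ w₂
  obtain ⟨a⟩ := hH u
  rcases hcov ⟨u, a⟩ with hx | hx
  · exact hu₁ (hw₁ _ hx)
  · exact hu₂ (hw₂ _ hx)

lemma IsModule.preimage (φ : Iso G K) {N : Set K.V} (h : K.IsModule N) :
    G.IsModule (φ.toEquiv ⁻¹' N) := by
  intro v hv x hx y hy
  rw [φ.adj_iff, φ.adj_iff]
  exact h _ hv _ hx _ hy

lemma isModule_range_inl_par (X Y : LGraph) : (X.par Y).IsModule (Set.range Sum.inl) := by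
  rintro (a | b) hv _ ⟨x, rfl⟩ _ ⟨y, rfl⟩
  · exact absurd ⟨a, rfl⟩ hv
  · exact Iff.rfl

lemma isModule_range_inr_par (X Y : LGraph) : (X.par Y).IsModule (Set.range Sum.inr) := by
  rintro (a | b) hv _ ⟨x, rfl⟩ _ ⟨y, rfl⟩
  · exact Iff.rfl
  · exact absurd ⟨b, rfl⟩ hv

lemma Prime.comp_not_iso_par (hP : P.Prime) (hcard : 3 ≤ Fintype.card P.V)
    (hH : ∀ v, Nonempty (H v).V) {X Y : LGraph} (φ : Iso (P.comp H) (X.par Y))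
    (hX : Nonempty X.V) (hY : Nonempty Y.V) : False := by
  have hcov : ∀ z, z ∈ φ.toEquiv ⁻¹' Set.range Sum.inl ∨ z ∈ φ.toEquiv ⁻¹' Set.range Sum.inr :=
    fun z => by
      rcases h : φ.toEquiv z with a | b
      exacts [.inl ⟨a, h.symm⟩, .inr ⟨b, h.symm⟩]
  obtain ⟨x⟩ := hX
  obtain ⟨y⟩ := hY
  rcases hP.eq_univ_or_eq_univ_of_isModule hcard hH ((isModule_range_inl_par X Y).preimage φ)
    ((isModule_range_inr_par X Y).preimage φ) hcov with h | h
  · obtain ⟨a, ha⟩ := h.symm.subset (Set.mem_univ (φ.toEquiv.symm (.inr y)))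
    cases ha.trans (φ.toEquiv.apply_symm_apply _)
  · obtain ⟨b, hb⟩ := h.symm.subset (Set.mem_univ (φ.toEquiv.symm (.inl x)))
    cases hb.trans (φ.toEquiv.apply_symm_apply _)

def IsJoinCut (G : LGraph) (S : Set G.V) : Prop :=
  S.Nonempty ∧ Sᶜ.Nonempty ∧ ∀ x ∈ S, ∀ y ∉ S, G.adj x y

lemma IsJoinCut.preimage (φ : Iso G K) {S : Set K.V} (h : K.IsJoinCut S) :
    G.IsJoinCut (φ.toEquiv ⁻¹' S) := by
  obtain ⟨⟨x, hx⟩, ⟨y, hy⟩, hxy⟩ := h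
  refine ⟨⟨φ.toEquiv.symm x, by simpa⟩, ⟨φ.toEquiv.symm y, by simpa⟩, fun u hu v hv => ?_⟩
  exact (φ.adj_iff u v).mpr (hxy _ hu _ hv)

lemma not_isJoinCut_par {X Y : LGraph} (hX : Nonempty X.V) (hY : Nonempty Y.V)
    (S : Set (X.par Y).V) : ¬ (X.par Y).IsJoinCut S := by
  rintro ⟨⟨u, hu⟩, ⟨v, hv⟩, hS⟩
  have hside : ∀ z z', (X.par Y).adj z z' → z.isLeft = z'.isLeft := by
    rintro (z | z) (z' | z') h <;> first | rfl | exact h.elim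
  have hall : ∀ z : (X.par Y).V, Sum.isLeft z = Sum.isLeft v := by
    intro z
    by_cases hz : z ∈ S
    · exact hside z v (hS z hz v hv)
    · exact (hside u z (hS u hu z hz)).symm.trans (hside u v (hS u hu v hv))
  obtain ⟨x⟩ := hX
  obtain ⟨y⟩ := hY
  simpa using (hall (.inl x)).trans (hall (.inr y)).symm

lemma IsJoinCut.isModule {S : Set G.V} (h : G.IsJoinCut S) : G.IsModule S :=
  fun v hv x hx y hy => iff_of_true (G.symm (h.2.2 x hx v hv)) (G.symm (h.2.2 y hy v hv))

lemma IsJoinCut.isModule_compl {S : Set G.V} (h : G.IsJoinCut S) : G.IsModule Sᶜ :=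
  fun v hv x hx y hy => iff_of_true (h.2.2 v (not_not.mp hv) x hx) (h.2.2 v (not_not.mp hv) y hy)

lemma Prime.not_isJoinCut_comp (hP : P.Prime) (hcard : 3 ≤ Fintype.card P.V)
    (hH : ∀ v, Nonempty (H v).V) (S : Set (P.comp H).V) : ¬ (P.comp H).IsJoinCut S := by
  intro h
  rcases hP.eq_univ_or_eq_univ_of_isModule hcard hH h.isModule h.isModule_compl
    (fun x => em (x ∈ S)) with h1 | h1
  · exact h.2.1.ne_empty (by simp [h1])
  · exact h.1.ne_empty (by simpa using h1)

section Factor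

variable {C c D X : LGraph} {R : Set C.V} {T : Set D.V} (χ : Iso (C.plug R c) (D.plug T X))
  (hc : ∀ z, (χ.toEquiv (.inr z)).isRight)

def Iso.innerContext : LGraph := C.induce {a | (χ.toEquiv (.inl a)).isRight}

def Iso.innerPos : Set χ.innerContext.V := {s | s.1 ∈ R}

include hc

def Iso.outerIso : Iso C (D.plug T χ.innerContext) where
  toEquiv := Equiv.sumSplitLeft χ.toEquiv hc
  adj_iff a a' := by
    have key := χ.adj_iff (.inl a) (.inl a')
    rcases ha : χ.toEquiv (.inl a) with b | x <;> rcases ha' : χ.toEquiv (.inl a') with b' | x' <;>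
      rw [ha, ha'] at key
    · erw [Equiv.sumSplitLeft_apply_of_eq_inl _ hc ha, Equiv.sumSplitLeft_apply_of_eq_inl _ hc ha']
      exact key
    · erw [Equiv.sumSplitLeft_apply_of_eq_inl _ hc ha,
        Equiv.sumSplitLeft_apply_of_isRight _ hc (Sum.isRight_iff.mpr ⟨x', ha'⟩)]
      exact key
    · erw [Equiv.sumSplitLeft_apply_of_isRight _ hc (Sum.isRight_iff.mpr ⟨x, ha⟩),
        Equiv.sumSplitLeft_apply_of_eq_inl _ hc ha']
      exact key
    · erw [Equiv.sumSplitLeft_apply_of_isRight _ hc (Sum.isRight_iff.mpr ⟨x, ha⟩),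
        Equiv.sumSplitLeft_apply_of_isRight _ hc (Sum.isRight_iff.mpr ⟨x', ha'⟩)]
      exact Iff.rfl
  label_eq a := by
    rcases ha : χ.toEquiv (.inl a) with b | x
    · erw [Equiv.sumSplitLeft_apply_of_eq_inl _ hc ha]
      exact χ.label_eq_of_eq ha
    · erw [Equiv.sumSplitLeft_apply_of_isRight _ hc (Sum.isRight_iff.mpr ⟨x, ha⟩)]
      rfl

lemma Iso.mem_iff_outerIso_mem (z₀ : c.V) (a : C.V) :
    a ∈ R ↔ (χ.outerIso hc).toEquiv a ∈ {u | Sum.elim (· ∈ T) (· ∈ χ.innerPos) u} := by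
  rcases ha : χ.toEquiv (.inl a) with b | x
  · erw [Equiv.sumSplitLeft_apply_of_eq_inl _ hc ha]
    obtain ⟨y, hy⟩ := Sum.isRight_iff.mp (hc z₀)
    exact χ.adj_iff_of_eq ha hy
  · erw [Equiv.sumSplitLeft_apply_of_isRight _ hc (Sum.isRight_iff.mpr ⟨x, ha⟩)]
    exact Iff.rfl

def Iso.innerIso : Iso (χ.innerContext.plug χ.innerPos c) X where
  toEquiv := Equiv.sumSplitRight χ.toEquiv hc
  adj_iff := by
    have key (u u' : (C.plug R c).V) (hu hu') := χ.adj_iff_of_eq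
      (Sum.inr_getRight (χ.toEquiv u) hu).symm (Sum.inr_getRight (χ.toEquiv u') hu').symm
    rintro (s | z) (s' | z')
    exacts [key (.inl s.1) (.inl s'.1) s.2 s'.2, key (.inl s.1) (.inr z') s.2 (hc z'),
      key (.inr z) (.inl s'.1) (hc z) s'.2, key (.inr z) (.inr z') (hc z) (hc z')]
  label_eq := by
    have key (u : (C.plug R c).V) (hu) := χ.label_eq_of_eq (Sum.inr_getRight (χ.toEquiv u) hu).symm
    rintro (s | z)
    exacts [key (.inl s.1) s.2, key (.inr z) (hc z)]

theorem Iso.exists_plug_factor (z₀ : c.V) :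
    ∃ (E : LGraph) (R' : Set E.V), Nonempty (Iso (E.plug R' c) X) ∧
      ∀ Z, Nonempty (Iso (C.plug R Z) (D.plug T (E.plug R' Z))) :=
  ⟨χ.innerContext, χ.innerPos, ⟨χ.innerIso hc⟩, fun Z =>
    ⟨(plugCongrLeft (χ.outerIso hc) (χ.mem_iff_outerIso_mem hc z₀) Z).trans
      (plugPlug D T _ _ Z).symm⟩⟩

end Factor

def Iso.induce (χ : Iso G K) {S : Set G.V} {S' : Set K.V} (h : ∀ x, x ∈ S ↔ χ.toEquiv x ∈ S') :
    Iso (G.induce S) (K.induce S') where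
  toEquiv := χ.toEquiv.subtypeEquiv h
  adj_iff a b := χ.adj_iff a b
  label_eq a := χ.label_eq a

lemma Prime.exists_fiber_of_iso_comp {K : Q.V → LGraph} (hQ : Q.Prime)
    (hcardQ : 3 ≤ Fintype.card Q.V) (hK : ∀ u, Nonempty (K u).V) (hcardP : 2 ≤ Fintype.card P.V)
    (hH : ∀ v, Nonempty (H v).V) (χ : Iso (Q.comp K) (P.comp H)) (v : P.V) :
    ∃ u, ∀ y, (χ.toEquiv y).1 = v → y.1 = u := by
  obtain ⟨a⟩ := hH v
  obtain ⟨v', hv'⟩ := Fintype.exists_ne_of_one_lt_card hcardP v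
  obtain ⟨b⟩ := hH v'
  obtain ⟨u, hu⟩ := hQ.exists_fiber_of_isModule hcardQ hK ((isModule_fiber P H v).preimage χ)
    ⟨χ.toEquiv.symm ⟨v, a⟩, congrArg Sigma.fst (χ.toEquiv.apply_symm_apply _)⟩
    ((Set.ne_univ_iff_exists_notMem _).mpr ⟨χ.toEquiv.symm ⟨v', b⟩,
      fun h => hv' ((congrArg Sigma.fst (χ.toEquiv.apply_symm_apply _)).symm.trans h)⟩)
  exact ⟨u, fun y hy => hu y hy⟩

lemma Prime.exists_iso_of_iso_comp {K : Q.V → LGraph} (hQ : Q.Prime)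
    (hcardQ : 3 ≤ Fintype.card Q.V) (hK : ∀ u, Nonempty (K u).V) (hP : P.Prime)
    (hcardP : 3 ≤ Fintype.card P.V) (hH : ∀ v, Nonempty (H v).V)
    (χ : Iso (Q.comp K) (P.comp H)) (v : P.V) : ∃ u, Nonempty (Iso (K u) (H v)) := by
  obtain ⟨u, hu⟩ := hQ.exists_fiber_of_iso_comp hcardQ hK hP.1 hH χ v
  obtain ⟨v', hv'⟩ := hP.exists_fiber_of_iso_comp hcardP hH hQ.1 hK χ.symm u
  obtain ⟨a⟩ := hH v
  have hvv' : v = v' :=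
    hv' ⟨v, a⟩ (hu _ (congrArg Sigma.fst (χ.toEquiv.apply_symm_apply _)))
  subst hvv'
  have hfib : ∀ y, y ∈ {y : (Q.comp K).V | y.1 = u} ↔ χ.toEquiv y ∈ {x | x.1 = v} :=
    fun y => ⟨fun hy => hv' _ ((congrArg Sigma.fst (χ.toEquiv.symm_apply_apply y)).trans hy), hu y⟩
  exact ⟨u, ⟨(fiberIso Q K u).trans ((χ.induce hfib).trans (fiberIso P H v).symm)⟩⟩

end LGraph

open LGraph Function

lemma GSRule.conclusion_cases {p c : LGraph} (h : GSRule p c) :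
    (∃ X Y : LGraph, Nonempty X.V ∧ Nonempty Y.V ∧ c = X.par Y) ∨
      ∃ (Q : LGraph) (H : Q.V → LGraph), Q.Prime ∧ 3 ≤ Fintype.card Q.V ∧
        (∀ v, Nonempty (H v).V) ∧ Nonempty (Iso c (Q.comp H)) ∧
        ∃ (n : ℕ) (F : Fin n → LGraph), p = bigTensor n F ∧ ∀ v, ∃ i, (F i).iso (H v) := by
  cases h with
  | ai a => exact .inl ⟨_, _, ⟨()⟩, ⟨()⟩, rfl⟩
  | ss A B S hA hS =>
    obtain ⟨b, -⟩ := Set.nonempty_iff_ne_empty.mpr hS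
    exact .inl ⟨_, _, ⟨b⟩, hA, rfl⟩
  | p n Q e M N hQ hn hM =>
    by_cases hN : Nonempty (Q.comp fun v => N (e v)).V
    · obtain ⟨a⟩ := hM (e (e.symm ⟨0, by omega⟩))
      exact .inl ⟨_, _, ⟨(⟨e.symm ⟨0, by omega⟩, a⟩ : Σ v, (M (e v)).V)⟩, hN, rfl⟩
    · have : IsEmpty (Q.comp fun v => N (e v)).V := not_nonempty_iff.mp hN
      have hNi (i : Fin n) : IsEmpty (N i).V :=
        ⟨fun b => hN ⟨(⟨e.symm i, (e.apply_symm_apply i).symm ▸ b⟩ : Σ v, (N (e v)).V)⟩⟩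
      refine .inr ⟨Q.dual, fun v => M (e v), hQ.dual, ?_, fun v => hM _,
        ⟨parEmptyRight _ _⟩, n, _, rfl, fun v => ⟨e v, ⟨parEmptyRight _ _⟩⟩⟩
      change 3 ≤ Fintype.card Q.V
      rw [Fintype.card_congr e, Fintype.card_fin]
      omega

lemma GSRule.not_isJoinCut {p c : LGraph} (h : GSRule p c) (S : Set c.V) :
    ¬ c.IsJoinCut S := by
  rcases h.conclusion_cases with ⟨X, Y, hX, hY, rfl⟩ | ⟨Q, H, hQ, hcard, hH, ⟨φ⟩, -⟩
  · exact not_isJoinCut_par hX hY S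
  · exact fun hS => hQ.not_isJoinCut_comp hcard hH _ (hS.preimage φ.symm)

section Derivations

variable {Rules : LGraph → LGraph → Prop} {G K X Y : LGraph}

lemma Deriv.of_iso (φ : Iso G K) : Deriv Rules G K := .single (.inl ⟨φ⟩)

lemma Deriv.of_step (h : Step Rules G K) : Deriv Rules G K := .single (.inr h)

lemma Provable.of_iso (h : Provable Rules G) (φ : Iso G K) : Provable Rules K :=
  h.tail (.inl ⟨φ⟩)

lemma Provable.of_isEmpty [IsEmpty G.V] : Provable Rules G := Deriv.of_iso Iso.ofIsEmpty

lemma Step.plug (h : Step Rules X Y) (C : LGraph) (S : Set C.V) :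
    Step Rules (C.plug S X) (C.plug S Y) := by
  obtain ⟨D, T, p, c, hr, ⟨φ⟩, ⟨ψ⟩⟩ := h
  exact ⟨C.plug S D, _, p, c, hr, ⟨(plugCongr S φ).trans (plugPlug C S D T p)⟩,
    ⟨(plugCongr S ψ).trans (plugPlug C S D T c)⟩⟩

lemma Deriv.plug (h : Deriv Rules X Y) (C : LGraph) (S : Set C.V) :
    Deriv Rules (C.plug S X) (C.plug S Y) := by
  induction h with
  | refl => exact .refl
  | tail _ h ih =>
    rcases h with ⟨⟨φ⟩⟩ | h
    · exact ih.tail (.inl ⟨plugCongr S φ⟩)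
    · exact ih.tail (.inr (h.plug C S))

lemma Deriv.comp_update (h : Deriv Rules X Y) (P : LGraph) (H : P.V → LGraph) (w : P.V) :
    Deriv Rules (P.comp (update H w X)) (P.comp (update H w Y)) :=
  ((Deriv.of_iso (compUpdateIso P H w X)).trans (h.plug _ _)).trans
    (Deriv.of_iso (compUpdateIso P H w Y).symm)

lemma Provable.comp_update {P : LGraph} {H : P.V → LGraph} {w : P.V}
    (h : Provable Rules (P.comp (update H w LGraph.empty)))
    (hX : Provable Rules X) : Provable Rules (P.comp (update H w X)) :=
  h.trans (Deriv.comp_update hX P H w)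

lemma provable_comp_of_forall {P : LGraph} {H : P.V → LGraph} (h : ∀ v, Provable Rules (H v)) :
    Provable Rules (P.comp H) := by
  suffices ∀ s : Finset P.V, Provable Rules (P.comp fun v => if v ∈ s then H v else .empty) by
    simpa using this Finset.univ
  intro s
  induction s using Finset.induction_on with
  | empty =>
    have : IsEmpty (P.comp fun v => if v ∈ (∅ : Finset P.V) then H v else .empty).V :=
      ⟨fun ⟨v, a⟩ => by simp at a; exact isEmptyElim a⟩
    exact .of_isEmpty
  | insert a s ha ih =>
    have hF : (fun v => if v ∈ insert a s then H v else .empty) =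
        update (fun v => if v ∈ s then H v else .empty) a (H a) := by
      ext1 v
      by_cases hv : v = a <;> simp [hv]
    have hF' : (fun v => if v ∈ s then H v else LGraph.empty) =
        update (fun v => if v ∈ s then H v else .empty) a .empty := by
      simp [ha]
    rw [hF]
    rw [hF'] at ih
    exact ih.comp_update (h a)

end Derivations

lemma GSRule.nonempty_conclusion {p c : LGraph} (h : GSRule p c) : Nonempty c.V := by
  rcases h.conclusion_cases with ⟨X, Y, ⟨x⟩, -, rfl⟩ | ⟨Q, H, -, hcard, hH, ⟨φ⟩, -⟩
  · exact ⟨.inl x⟩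
  · obtain ⟨v⟩ : Nonempty Q.V := Fintype.card_pos_iff.mp (by omega)
    obtain ⟨a⟩ := hH v
    exact ⟨φ.toEquiv.symm ⟨v, a⟩⟩

lemma GSRule.forall_isLeft_or_forall_isRight {p c C A B : LGraph} {R : Set C.V}
    (h : GSRule p c) (χ : Iso (C.plug R c) (A.tensor B)) :
    (∀ z, (χ.toEquiv (.inr z)).isLeft) ∨ ∀ z, (χ.toEquiv (.inr z)).isRight := by
  by_contra! hmix
  obtain ⟨⟨z₁, h₁⟩, z₂, h₂⟩ := hmix
  refine h.not_isJoinCut {z | (χ.toEquiv (.inr z)).isLeft}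
    ⟨⟨z₂, Sum.not_isRight.mp h₂⟩, ⟨z₁, h₁⟩, fun x hx y hy => ?_⟩
  obtain ⟨a, ha⟩ := Sum.isLeft_iff.mp hx
  obtain ⟨b, hb⟩ := Sum.isRight_iff.mp (Sum.not_isLeft.mp hy)
  exact (χ.adj_iff_of_eq (u := .inr x) (u' := .inr y) ha hb).mpr trivial

lemma provable_of_step_into_tensor_left {G p c C A B : LGraph} {R : Set C.V}
    (hrule : GSRule p c) (χ₀ : Iso G (C.plug R p)) (χ : Iso (C.plug R c) (A.tensor B))
    (hL : ∀ z, (χ.toEquiv (.inr z)).isLeft)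
    (ih : ∀ {A' B' : LGraph}, Nonempty (Iso G (A'.tensor B')) →
      Provable GSRule A' ∧ Provable GSRule B') :
    Provable GSRule A ∧ Provable GSRule B := by
  obtain ⟨z₀⟩ := hrule.nonempty_conclusion
  obtain ⟨E, R', ⟨ψ⟩, hZ⟩ := (χ.trans (tensorIsoPlugUniv A B)).exists_plug_factor
    (fun z => (Sum.isRight_swap _).trans (hL z)) z₀
  obtain ⟨θ⟩ := hZ p
  obtain ⟨hEp, hB⟩ := ih ⟨χ₀.trans (θ.trans (tensorIsoPlugUniv _ _).symm)⟩
  have hstep : Step GSRule (E.plug R' p) (E.plug R' c) :=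
    ⟨E, R', p, c, hrule, ⟨Iso.refl _⟩, ⟨Iso.refl _⟩⟩
  exact ⟨Provable.of_iso (hEp.trans (Deriv.of_step hstep)) ψ, hB⟩

theorem Provable.of_iso_tensor {G : LGraph} (h : Provable GSRule G) :
    ∀ {A B : LGraph}, Nonempty (Iso G (A.tensor B)) → Provable GSRule A ∧ Provable GSRule B := by
  induction h with
  | refl =>
    rintro A B ⟨φ⟩
    have : IsEmpty A.V := ⟨fun a => isEmptyElim (φ.toEquiv.symm (.inl a))⟩
    have : IsEmpty B.V := ⟨fun b => isEmptyElim (φ.toEquiv.symm (.inr b))⟩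
    exact ⟨.of_isEmpty, .of_isEmpty⟩
  | tail _ hstep ih =>
    rintro A B ⟨φ⟩
    rcases hstep with ⟨⟨ψ⟩⟩ | ⟨C, R, p, c, hrule, ⟨χ₀⟩, ⟨χ₁⟩⟩
    · exact ih ⟨ψ.trans φ⟩
    have χ := χ₁.symm.trans φ
    rcases hrule.forall_isLeft_or_forall_isRight χ with hL | hR
    · exact provable_of_step_into_tensor_left hrule χ₀ χ hL ih
    · exact (provable_of_step_into_tensor_left hrule χ₀ (χ.trans (tensorComm A B))
        (fun z => (Sum.isLeft_swap _).trans (hR z)) ih).symm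

theorem Provable.of_bigTensor : ∀ {n : ℕ} {F : Fin n → LGraph},
    Provable GSRule (bigTensor n F) → ∀ i, Provable GSRule (F i)
  | n + 1, F, h, i => by
    obtain ⟨h₀, hs⟩ := h.of_iso_tensor ⟨Iso.refl _⟩
    cases i using Fin.cases with
    | zero => exact h₀
    | succ i => exact hs.of_bigTensor i

lemma GSRule.forall_provable_of_iso_comp {p c P : LGraph} {H : P.V → LGraph} (hrule : GSRule p c)
    (hp : Provable GSRule p) (hP : P.Prime) (hcard : 3 ≤ Fintype.card P.V)
    (hH : ∀ v, Nonempty (H v).V) (χ : Iso c (P.comp H)) (v : P.V) : Provable GSRule (H v) := by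
  rcases hrule.conclusion_cases with
    ⟨X, Y, hX, hY, rfl⟩ | ⟨Q, K, hQ, hcardQ, hK, ⟨φ⟩, n, F, rfl, hF⟩
  · exact (hP.comp_not_iso_par hcard hH χ.symm hX hY).elim
  · obtain ⟨u, ⟨ψ⟩⟩ := hQ.exists_iso_of_iso_comp hcardQ hK hP hcard hH (φ.symm.trans χ) v
    obtain ⟨i, ⟨ι⟩⟩ := hF u
    exact ((hp.of_bigTensor i).of_iso ι).of_iso ψ

lemma exists_provable_of_forall_provable {Rules : LGraph → LGraph → Prop} {P : LGraph}
    {H : P.V → LGraph} [Nonempty P.V] (h : ∀ v, Provable Rules (H v)) :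
    ∃ v, Provable Rules (H v) ∧ Provable Rules (P.comp (update H v .empty)) := by
  obtain ⟨v₀⟩ := ‹Nonempty P.V›
  refine ⟨v₀, h v₀, provable_comp_of_forall fun v => ?_⟩
  rcases eq_or_ne v v₀ with rfl | hv
  · rw [update_self]
    exact .refl
  · rw [update_of_ne hv]
    exact h v

lemma exists_provable_of_deriv_component {Rules : LGraph → LGraph → Prop} {P : LGraph}
    {H : P.V → LGraph} {w : P.V} {D : LGraph} (hD : Deriv Rules D (H w))
    (hprov : Provable Rules (P.comp (update H w D)))
    (ih : Nonempty D.V → ∃ v, Provable Rules (update H w D v) ∧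
      Provable Rules (P.comp (update (update H w D) v .empty))) :
    ∃ v, Provable Rules (H v) ∧ Provable Rules (P.comp (update H v .empty)) := by
  by_cases hD' : Nonempty D.V
  · obtain ⟨v, hv, hrest⟩ := ih hD'
    rcases eq_or_ne v w with rfl | hvw
    · rw [update_self] at hv
      rw [update_idem] at hrest
      exact ⟨v, hv.trans hD, hrest⟩
    · rw [update_of_ne hvw] at hv
      rw [update_comm hvw.symm] at hrest
      have := hrest.trans (Deriv.comp_update hD P (update H v .empty) w)
      rw [update_eq_self_iff.mpr (update_of_ne hvw.symm _ _).symm] at this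
      exact ⟨v, hv, this⟩
  · have : IsEmpty D.V := not_nonempty_iff.mp hD'
    exact ⟨w, Provable.of_isEmpty.trans hD,
      hprov.trans (Deriv.comp_update (Deriv.of_iso Iso.ofIsEmpty) P H w)⟩

lemma exists_provable_of_step_into_comp {G p c C P : LGraph} {R : Set C.V} {H : P.V → LGraph}
    (hrule : GSRule p c) (hG : Provable GSRule G) (χ₀ : Iso G (C.plug R p))
    (χ : Iso (C.plug R c) (P.comp H)) (hP : P.Prime) (hcard : 3 ≤ Fintype.card P.V)
    (hH : ∀ v, Nonempty (H v).V) (a₀ : C.V)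
    (ih : ∀ {H' : P.V → LGraph}, (∀ v, Nonempty (H' v).V) → Nonempty (Iso G (P.comp H')) →
      ∃ v, Provable GSRule (H' v) ∧ Provable GSRule (P.comp (update H' v .empty))) :
    ∃ v, Provable GSRule (H v) ∧ Provable GSRule (P.comp (update H v .empty)) := by
  obtain ⟨z₀⟩ := hrule.nonempty_conclusion
  obtain ⟨w, hw⟩ := hP.exists_fiber_of_isModule hcard hH
    ((isModule_range_inr_plug C R c).preimage χ.symm)
    ⟨χ.toEquiv (.inr z₀), z₀, (χ.toEquiv.symm_apply_apply _).symm⟩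
    ((Set.ne_univ_iff_exists_notMem _).mpr ⟨χ.toEquiv (.inl a₀),
      fun ⟨_, hz⟩ => by cases hz.trans (χ.toEquiv.symm_apply_apply _)⟩)
  obtain ⟨E, R', ⟨ψ⟩, hZ⟩ := (χ.trans (compIsoCompAt P H w)).exists_plug_factor
    (fun z => Equiv.sigmaSplit_isRight _ (hw _ ⟨z, (χ.toEquiv.symm_apply_apply _).symm⟩)) z₀
  obtain ⟨θ⟩ := hZ p
  have hGiso : Iso G (P.comp (update H w (E.plug R' p))) :=
    χ₀.trans (θ.trans (compUpdateIso P H w _).symm)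
  have hstep : Step GSRule (E.plug R' p) (E.plug R' c) :=
    ⟨E, R', p, c, hrule, ⟨Iso.refl _⟩, ⟨Iso.refl _⟩⟩
  refine exists_provable_of_deriv_component ((Deriv.of_step hstep).trans (Deriv.of_iso ψ))
    (hG.of_iso hGiso) fun hne => ih (fun v => ?_) ⟨hGiso⟩
  rcases eq_or_ne v w with rfl | hv
  · rwa [update_self]
  · rw [update_of_ne hv]
    exact hH v

theorem Provable.exists_provable_of_iso_comp {G : LGraph} (h : Provable GSRule G) {P : LGraph}
    (hP : P.Prime) (hcard : 3 ≤ Fintype.card P.V) :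
    ∀ {H : P.V → LGraph}, (∀ v, Nonempty (H v).V) → Nonempty (Iso G (P.comp H)) →
      ∃ v, Provable GSRule (H v) ∧ Provable GSRule (P.comp (update H v .empty)) := by
  have : Nonempty P.V := Fintype.card_pos_iff.mp (by omega)
  induction h with
  | refl =>
    rintro H hH ⟨φ⟩
    obtain ⟨v⟩ := this
    obtain ⟨a⟩ := hH v
    exact isEmptyElim (φ.toEquiv.symm ⟨v, a⟩)
  | tail hG hstep ih =>
    rintro H hH ⟨φ⟩
    rcases hstep with ⟨⟨ψ⟩⟩ | ⟨C, R, p, c, hrule, ⟨χ₀⟩, ⟨χ₁⟩⟩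
    · exact ih hH ⟨ψ.trans φ⟩
    have χ := χ₁.symm.trans φ
    cases isEmpty_or_nonempty C.V with
    | inl hC =>
      exact exists_provable_of_forall_provable <| hrule.forall_provable_of_iso_comp
        (Provable.of_iso hG (χ₀.trans (plugEmptyLeft R p))) hP hcard hH
        ((plugEmptyLeft R c).symm.trans χ)
    | inr hC =>
      obtain ⟨a₀⟩ := hC
      exact exists_provable_of_step_into_comp hrule hG χ₀ χ hP hcard hH a₀ ih

end

/-- Let `P` be a prime graph with `n = |V(P)| ≥ 4` and let
`M₁, …, Mₙ` be non-empty graphs. Then `P⟨M₁, …, Mₙ⟩` is provable in GS iff there is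
some `i` such that `Mᵢ` is provable in GS and `P⟨M₁, …, M_{i-1}, ∅, M_{i+1}, …, Mₙ⟩`
is provable in GS. -/
theorem prime_composition_provable_iff (n : ℕ) (P : LGraph) (e : P.V ≃ Fin n)
    (hP : P.Prime) (hn : 4 ≤ n) (M : Fin n → LGraph) (hM : ∀ i, Nonempty (M i).V) :
    Provable GSRule (P.comp fun v => M (e v)) ↔
      ∃ i : Fin n, Provable GSRule (M i) ∧
        Provable GSRule (P.comp fun v => Function.update M i LGraph.empty (e v)) := by
  classical
  have hupdate (i : Fin n) (X : LGraph) :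
      (fun v => Function.update M i X (e v)) =
        Function.update (fun v => M (e v)) (e.symm i) X :=
    Function.update_comp_equiv M e i X
  constructor
  · intro h
    obtain ⟨v, hv, hrest⟩ := h.exists_provable_of_iso_comp hP
      (by rw [Fintype.card_congr e, Fintype.card_fin]; omega) (fun v => hM (e v))
      ⟨LGraph.Iso.refl _⟩
    refine ⟨e v, hv, ?_⟩
    rwa [hupdate, e.symm_apply_apply]
  · rintro ⟨i, hi, hrest⟩
    rw [hupdate] at hrest
    have := hrest.comp_update hi
    rwa [Function.update_eq_self_iff.mpr (by simp)] at this
end GSP
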